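/- For 0 < q < 1 and z₁, z₂ complex with z₁ ≠ 0, z₂ ≠ 0, and fixed n: the limit as m → ∞ of z₁^{-m} H_{m,n}(z₁, z₂ | q) equals z₂^n (1/(z₁z₂); q)_n, where (a;q)_n = ∏_{j=0}^{n-1}(1 - a q^j). -/

import Mathlib

open Finset Filter

/-!
For `m ≥ n`, `z₁⁻ᵐ H_{m,n}(z₁, z₂ | q)` is a sum over `k ≤ n` in which `m` enters only through
`[m, k]_q (q;q)_k = (q^{m-k+1};q)_k`, and this tends to `1` because `q^m → 0`. The limiting sum is
`z₂ⁿ (1/(z₁z₂);q)_n` by the q-binomial theorem.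
-/

noncomputable def qPoch (a q : ℂ) (n : ℕ) : ℂ :=
  ∏ j ∈ Finset.range n, (1 - a * q ^ j)

noncomputable def qbinom (q : ℂ) : ℕ → ℕ → ℂ
  | _, 0 => 1
  | 0, _ + 1 => 0
  | m + 1, k + 1 => qbinom q m k + q ^ (k + 1) * qbinom q m (k + 1)

/-- The first q-analogue of the 2D Hermite polynomials. -/
noncomputable def H2D (q z1 z2 : ℂ) (m n : ℕ) : ℂ :=
  ∑ k ∈ Finset.range (min m n + 1),
    qbinom q m k * qbinom q n k * (-1) ^ k * q ^ (k.choose 2) * qPoch q q k *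
      z1 ^ (m - k) * z2 ^ (n - k)

/-- The second q-analogue of the 2D Hermite polynomials. -/
noncomputable def h2D (q z1 z2 : ℂ) (m n : ℕ) : ℂ :=
  ∑ j ∈ Finset.range (min m n + 1),
    qbinom q m j * qbinom q n j * q ^ ((m - j) * (n - j)) * (-1) ^ j * qPoch q q j *
      z1 ^ (m - j) * z2 ^ (n - j)

/-- The q-2D ultraspherical (q-disk / q-Zernike) polynomials. -/
noncomputable def p2D (q b z1 z2 : ℂ) (m n : ℕ) : ℂ :=
  ∑ k ∈ Finset.range (min m n + 1),
    qbinom q m k * qbinom q n k * (-1) ^ k * q ^ (k.choose 2) * qPoch q q k *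
      qPoch (b * q) q (m + n - k) * z1 ^ (m - k) * z2 ^ (n - k)

/-- The infinite q-Pochhammer product (a;q)_∞. -/
noncomputable def qPochInf (a q : ℂ) : ℂ :=
  ∏' j : ℕ, (1 - a * q ^ j)

@[simp]
lemma qPoch_zero (a q : ℂ) : qPoch a q 0 = 1 := prod_range_zero _

lemma qPoch_succ (a q : ℂ) (n : ℕ) : qPoch a q (n + 1) = qPoch a q n * (1 - a * q ^ n) :=
  prod_range_succ _ _

lemma qPoch_succ' (a q : ℂ) (n : ℕ) : qPoch a q (n + 1) = (1 - a) * qPoch (a * q) q n := by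
  simp only [qPoch, prod_range_succ', pow_zero, mul_one, mul_assoc, ← pow_succ']
  ring

@[simp]
lemma qPoch_zero_left (q : ℂ) (n : ℕ) : qPoch 0 q n = 1 := by
  simp [qPoch]

lemma continuous_qPoch (q : ℂ) (n : ℕ) : Continuous fun a => qPoch a q n := by
  unfold qPoch
  fun_prop

@[simp]
lemma qbinom_zero_right (q : ℂ) (m : ℕ) : qbinom q m 0 = 1 := by
  cases m <;> rfl

lemma qbinom_succ_succ (q : ℂ) (m k : ℕ) :
    qbinom q (m + 1) (k + 1) = qbinom q m k + q ^ (k + 1) * qbinom q m (k + 1) := rfl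

lemma qbinom_eq_zero_of_lt (q : ℂ) {m k : ℕ} (h : m < k) : qbinom q m k = 0 := by
  induction m generalizing k with
  | zero => obtain ⟨j, rfl⟩ := Nat.exists_eq_add_of_lt h; rfl
  | succ m ih =>
    obtain ⟨j, rfl⟩ : ∃ j, k = j + 1 := ⟨k - 1, by omega⟩
    rw [qbinom_succ_succ, ih (by omega), ih (by omega), mul_zero, add_zero]

/-- The q-analogue of `(k + d)! / d! = (d + 1) ⋯ (d + k)`. -/
lemma qbinom_add_mul_qPoch (q : ℂ) (k d : ℕ) :
    qbinom q (k + d) k * qPoch q q k = qPoch (q ^ (d + 1)) q k := by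
  induction k generalizing d with
  | zero => simp
  | succ k ihk =>
    induction d with
    | zero =>
      have hself : qbinom q (k + 1) (k + 1) = qbinom q k k := by
        rw [qbinom_succ_succ, qbinom_eq_zero_of_lt q (Nat.lt_succ_self k), mul_zero, add_zero]
      have := ihk 0
      simp only [add_zero, zero_add, pow_one] at this ⊢
      rw [hself, qPoch_succ, ← mul_assoc, this]
    | succ d ihd =>
      have ihk_succ := ihk (d + 1)
      rw [show k + (d + 1) = k + 1 + d by omega] at ihk_succ
      rw [qPoch_succ, qPoch_succ', ← pow_succ] at ihd
      rw [show k + 1 + (d + 1) = k + 1 + d + 1 by omega, qbinom_succ_succ, qPoch_succ, qPoch_succ]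
      linear_combination (1 - q * q ^ k) * ihk_succ + q ^ (k + 1) * ihd

lemma tendsto_qbinom_mul_qPoch {q : ℂ} (hq : ‖q‖ < 1) (k : ℕ) :
    Tendsto (fun m => qbinom q m k * qPoch q q k) atTop (nhds 1) := by
  have hpow : Tendsto (fun m : ℕ => q ^ (m - k + 1)) atTop (nhds 0) :=
    (tendsto_pow_atTop_nhds_zero_of_norm_lt_one hq).comp
      ((tendsto_add_atTop_nat 1).comp (tendsto_sub_atTop_nat k))
  have hlim := ((continuous_qPoch q k).tendsto 0).comp hpow
  rw [qPoch_zero_left] at hlim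
  refine hlim.congr' ?_
  filter_upwards [eventually_ge_atTop k] with m hm
  rw [Function.comp_apply, ← qbinom_add_mul_qPoch, Nat.add_sub_cancel' hm]

/-- The finite q-binomial theorem (Rothe). -/
theorem sum_qbinom_mul_pow (q : ℂ) (n : ℕ) (x : ℂ) :
    ∑ k ∈ range (n + 1), qbinom q n k * (-1) ^ k * q ^ k.choose 2 * x ^ k = qPoch x q n := by
  induction n generalizing x with
  | zero => simp
  | succ n ih =>
    set g : ℕ → ℂ := fun k => qbinom q n k * (-1) ^ k * q ^ k.choose 2 * (x * q) ^ k with hg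
    have hterm : ∀ k, qbinom q (n + 1) (k + 1) * (-1) ^ (k + 1) * q ^ (k + 1).choose 2 * x ^ (k + 1)
        = -x * g k + g (k + 1) := by
      intro k
      simp only [hg, qbinom_succ_succ, Nat.choose_succ_succ', Nat.choose_one_right]
      ring
    have hshift : ∑ k ∈ range (n + 1), g (k + 1) = qPoch (x * q) q n - 1 := by
      have htop : g (n + 1) = 0 := by simp [hg, qbinom_eq_zero_of_lt q (Nat.lt_succ_self n)]
      have h := sum_range_succ' g (n + 1)
      rw [sum_range_succ, ih, htop] at h
      simp only [hg, qbinom_zero_right, pow_zero, mul_one, Nat.choose_zero_succ] at h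
      linear_combination -h
    rw [sum_range_succ', sum_congr rfl fun k _ => hterm k, sum_add_distrib, ← mul_sum, ih, hshift,
      qPoch_succ']
    simp only [qbinom_zero_right, pow_zero, Nat.choose_zero_succ, mul_one]
    ring

lemma inv_pow_mul_H2D {z1 : ℂ} (hz1 : z1 ≠ 0) (q z2 : ℂ) {m n : ℕ} (hnm : n ≤ m) :
    z1⁻¹ ^ m * H2D q z1 z2 m n = ∑ k ∈ range (n + 1), qbinom q m k * qPoch q q k *
      (qbinom q n k * (-1) ^ k * q ^ k.choose 2 * z1⁻¹ ^ k * z2 ^ (n - k)) := by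
  rw [H2D, min_eq_right hnm, mul_sum]
  refine sum_congr rfl fun k hk => ?_
  have hkm : k ≤ m := (Nat.lt_succ_iff.mp (mem_range.mp hk)).trans hnm
  rw [← Nat.sub_add_cancel hkm, pow_add, Nat.add_sub_cancel, inv_pow]
  field_simp

lemma pow_mul_qPoch_inv_mul {z2 : ℂ} (hz2 : z2 ≠ 0) (q z1 : ℂ) (n : ℕ) :
    z2 ^ n * qPoch (1 / (z1 * z2)) q n = ∑ k ∈ range (n + 1),
      qbinom q n k * (-1) ^ k * q ^ k.choose 2 * z1⁻¹ ^ k * z2 ^ (n - k) := by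
  rw [← sum_qbinom_mul_pow, mul_sum]
  refine sum_congr rfl fun k hk => ?_
  rw [pow_sub₀ _ hz2 (Nat.lt_succ_iff.mp (mem_range.mp hk)), one_div, mul_inv, mul_pow,
    inv_pow z2]
  ring

theorem tendsto_inv_pow_mul_H2D {q : ℂ} (hq : ‖q‖ < 1) {z1 z2 : ℂ} (hz1 : z1 ≠ 0) (hz2 : z2 ≠ 0)
    (n : ℕ) : Tendsto (fun m => z1⁻¹ ^ m * H2D q z1 z2 m n) atTop
      (nhds (z2 ^ n * qPoch (1 / (z1 * z2)) q n)) := by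
  have hlim := tendsto_finsetSum (range (n + 1)) fun k _ =>
    (tendsto_qbinom_mul_qPoch hq k).mul_const
      (qbinom q n k * (-1) ^ k * q ^ k.choose 2 * z1⁻¹ ^ k * z2 ^ (n - k))
  simp only [one_mul] at hlim
  rw [pow_mul_qPoch_inv_mul hz2]
  refine hlim.congr' ?_
  filter_upwards [eventually_ge_atTop n] with m hm
  exact (inv_pow_mul_H2D hz1 q z2 hm).symm

theorem stmt6 (n : ℕ) (z1 z2 : ℂ) (hz1 : z1 ≠ 0) (hz2 : z2 ≠ 0)
    (q : ℝ) (hq0 : 0 < q) (hq1 : q < 1) :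
    Tendsto (fun m : ℕ => z1⁻¹ ^ m * H2D (q : ℂ) z1 z2 m n) atTop
      (nhds (z2 ^ n * qPoch (1 / (z1 * z2)) (q : ℂ) n)) := by
  refine tendsto_inv_pow_mul_H2D ?_ hz1 hz2 n
  rwa [Complex.norm_real, Real.norm_of_nonneg hq0.le]
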